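/- arXiv:math/9806089 — 7 statements merged into one kernel-verified Lean document; each statement's English description precedes it below -/
import Mathlib

section
/- Let U ⊆ ℂ be an open set stable under complex conjugation, and let f be holomorphic on U and satisfy f(conj z) = conj(f(z)) for every z ∈ U. Then for every real number c and every r > 0 such that the circle {z : |z − c| = r} is contained in U, the circle integral ∮_{|z−c|=r} f(z) dz has zero real part. -/
/-!
Complex conjugation maps a circle with real center onto itself, reversing its orientation.
For `f` with `f (conj z) = conj (f z)` this turns `∮ f` into minus its own conjugate, so
`∮ f` is purely imaginary.
-/

open Complex ComplexConjugate Real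

theorem intervalIntegral.integral_conj {𝕜 : Type*} [RCLike 𝕜] (g : ℝ → 𝕜) (a b : ℝ) :
    ∫ x in a..b, conj (g x) = conj (∫ x in a..b, g x) := by
  simp only [intervalIntegral, map_sub, _root_.integral_conj]

theorem Function.Periodic.intervalIntegral_comp_neg {E : Type*} [NormedAddCommGroup E]
    [NormedSpace ℝ E] {g : ℝ → E} {T : ℝ} (hg : Function.Periodic g T) :
    ∫ x in 0..T, g (-x) = ∫ x in 0..T, g x := by
  simpa using hg.intervalIntegral_add_eq (-T) 0

theorem periodic_circleIntegral_integrand (f : ℂ → ℂ) (c : ℂ) (R : ℝ) :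
    Function.Periodic (fun θ => deriv (circleMap c R) θ • f (circleMap c R θ)) (2 * π) := by
  intro θ
  simp only [deriv_circleMap, periodic_circleMap c R θ, periodic_circleMap 0 R θ]

theorem circleIntegral_conj (f : ℂ → ℂ) (c : ℂ) (R : ℝ) :
    conj (∮ z in C(c, R), f z) = -∮ z in C(conj c, R), conj (f (conj z)) := by
  have hintegrand : ∀ θ : ℝ, conj (deriv (circleMap c R) θ • f (circleMap c R θ)) =
      -(deriv (circleMap (conj c) R) (-θ) • conj (f (conj (circleMap (conj c) R (-θ))))) := by
    intro θ
    simp only [deriv_circleMap, smul_eq_mul, map_mul, conj_circleMap, map_zero, conj_conj,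
      neg_neg, conj_I]
    ring
  simp only [circleIntegral, ← intervalIntegral.integral_conj, hintegrand,
    intervalIntegral.integral_neg]
  exact congrArg Neg.neg <|
    (periodic_circleIntegral_integrand (fun z => conj (f (conj z))) (conj c) R)
      |>.intervalIntegral_comp_neg

theorem circleIntegral_re_eq_zero_of_conj_symm_general (U : Set ℂ)
    (f : ℂ → ℂ)
    (hsym : ∀ z ∈ U, f ((starRingEnd ℂ) z) = (starRingEnd ℂ) (f z))
    (c : ℝ) (r : ℝ) (hr : 0 < r)
    (hsub : Metric.sphere (c : ℂ) r ⊆ U) :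
    (circleIntegral f (c : ℂ) r).re = 0 := by
  have hconj : conj (∮ z in C(c, r), f z) = -∮ z in C(c, r), f z := by
    rw [circleIntegral_conj, conj_ofReal]
    congr 1
    refine circleIntegral.integral_congr hr.le fun z hz => ?_
    simp only [hsym z (hsub hz), conj_conj]
  have hre := congrArg re hconj
  rw [conj_re, neg_re] at hre
  linarith

/-- If `U ⊆ ℂ` is open and stable under complex conjugation, and `f` is
holomorphic on `U` and satisfies `f (conj z) = conj (f z)` on `U`, then for every real
center `c` and radius `r > 0` with the circle `{z : |z − c| = r}` contained in `U`, the
circle integral `∮_{|z−c|=r} f(z) dz` has zero real part. -/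
theorem circleIntegral_re_eq_zero_of_conj_symm (U : Set ℂ) (hU : IsOpen U)
    (hUconj : ∀ z ∈ U, (starRingEnd ℂ) z ∈ U)
    (f : ℂ → ℂ) (hf : DifferentiableOn ℂ f U)
    (hsym : ∀ z ∈ U, f ((starRingEnd ℂ) z) = (starRingEnd ℂ) (f z))
    (c : ℝ) (r : ℝ) (hr : 0 < r)
    (hsub : Metric.sphere (c : ℂ) r ⊆ U) :
    (circleIntegral f (c : ℂ) r).re = 0 :=
  circleIntegral_re_eq_zero_of_conj_symm_general U f hsym c r hr hsub
end

section
/- Let t_1, …, t_n be distinct real numbers, let m_1, …, m_n be integers, and define f(z) = ∏_{k=1}^n (z − t_k)^{m_k} (integer powers, zpow) for z ∈ ℂ \ {t_1, …, t_n}. Then for every real number c and every r > 0 such that no t_k lies on the circle {z : |z − c| = r}, the circle integral ∮_{|z−c|=r} f(z) dz has zero real part; in particular every period of the 1-form f(z) dz around the points t_k is purely imaginary. -/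
open Complex ComplexConjugate Real

/-!
For a real center `c`, the substitution `θ ↦ 2π - θ` acts on the circle `c + R e^{iθ}` as
complex conjugation and reverses its orientation. If `f` commutes with conjugation on the
circle, as `∏ k, (z - t k) ^ m k` with real `t k` does, the integrand `g` of the circle
integral `I` satisfies `g (2π - θ) = -conj (g θ)`, hence `I = -conj I`. Both the substitution
and conjugation commute with the interval integral unconditionally, so no integrability of `f`
is required.
-/
theorem circleMap_two_pi_sub (c : ℂ) (R θ : ℝ) :
    circleMap c R (2 * π - θ) = circleMap c R (-θ) := by
  rw [sub_eq_neg_add, (periodic_circleMap c R) (-θ)]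

theorem circleIntegral_eq_neg_conj_of_conj {f : ℂ → ℂ} {c R : ℝ}
    (hf : ∀ z ∈ Metric.sphere (c : ℂ) |R|, f (conj z) = conj (f z)) :
    (∮ z in C(c, R), f z) = -conj (∮ z in C(c, R), f z) := by
  have hreflect : ∀ θ : ℝ,
      deriv (circleMap c R) (2 * π - θ) • f (circleMap c R (2 * π - θ)) =
        -conj (deriv (circleMap c R) θ • f (circleMap c R θ)) := fun θ => by
    have hconj : circleMap (c : ℂ) R (-θ) = conj (circleMap c R θ) := by
      rw [conj_circleMap, conj_ofReal]
    rw [deriv_circleMap, deriv_circleMap, circleMap_two_pi_sub, circleMap_two_pi_sub,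
      ← conj_circleMap_zero, hconj, hf _ (circleMap_mem_sphere' _ R θ)]
    simp only [smul_eq_mul, map_mul, conj_I]
    ring
  calc (∮ z in C(c, R), f z)
      = ∫ θ in (0 : ℝ)..2 * π,
          deriv (circleMap c R) (2 * π - θ) • f (circleMap c R (2 * π - θ)) := by
        rw [circleIntegral]
        simpa using (intervalIntegral.integral_comp_sub_left
          (fun θ => deriv (circleMap c R) θ • f (circleMap c R θ))
          (a := 0) (b := 2 * π) (2 * π)).symm
    _ = -conj (∮ z in C(c, R), f z) := by
        simp only [hreflect, intervalIntegral.integral_neg,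
          intervalIntegral.intervalIntegral_conj, circleIntegral]

theorem re_eq_zero_of_eq_neg_conj {z : ℂ} (h : z = -conj z) : z.re = 0 := by
  have := congrArg re h
  rw [neg_re, conj_re] at this
  linarith

theorem conj_prod_zpow_sub_ofReal {ι : Type*} (s : Finset ι) (t : ι → ℝ) (m : ι → ℤ)
    (z : ℂ) :
    conj (∏ k ∈ s, (z - t k) ^ m k) = ∏ k ∈ s, (conj z - t k) ^ m k := by
  simp only [map_prod, map_zpow₀, map_sub, conj_ofReal]

theorem circleIntegral_re_eq_zero_of_real_poles_general (n : ℕ) (t : Fin n → ℝ)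
    (m : Fin n → ℤ) (f : ℂ → ℂ)
    (hf : ∀ z : ℂ, (∀ k : Fin n, z ≠ (t k : ℂ)) →
      f z = ∏ k : Fin n, (z - (t k : ℂ)) ^ (m k))
    (c : ℝ) (r : ℝ) (hr : 0 < r)
    (hcirc : ∀ k : Fin n, ‖(t k : ℂ) - (c : ℂ)‖ ≠ r) :
    (circleIntegral f (c : ℂ) r).re = 0 := by
  refine re_eq_zero_of_eq_neg_conj (circleIntegral_eq_neg_conj_of_conj fun z hz => ?_)
  have avoid : ∀ w ∈ Metric.sphere (c : ℂ) |r|, ∀ k, w ≠ t k := fun w hw k hwk => by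
    rw [mem_sphere_iff_norm, abs_of_pos hr, hwk] at hw
    exact hcirc k hw
  have hz' : conj z ∈ Metric.sphere (c : ℂ) |r| := by
    rwa [mem_sphere_iff_norm, ← conj_ofReal c, ← map_sub, norm_conj, ← mem_sphere_iff_norm]
  rw [hf z (avoid z hz), hf _ (avoid _ hz'), conj_prod_zpow_sub_ofReal]

/-- Lemma 3.3.4 of the paper. Let `t 1, …, t n` be distinct real
numbers, `m 1, …, m n` integers, and `f z = ∏ k, (z − t k) ^ m k` (integer `zpow`) on
`ℂ \ {t 1, …, t n}`. Then for every real center `c` and radius `r > 0` such that no `t k`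
lies on the circle `{z : |z − c| = r}`, the circle integral of `f` over that circle has
zero real part: every period of the 1-form `f(z) dz` is purely imaginary. -/
theorem circleIntegral_re_eq_zero_of_real_poles (n : ℕ) (t : Fin n → ℝ)
    (ht : Function.Injective t) (m : Fin n → ℤ) (f : ℂ → ℂ)
    (hf : ∀ z : ℂ, (∀ k : Fin n, z ≠ (t k : ℂ)) →
      f z = ∏ k : Fin n, (z - (t k : ℂ)) ^ (m k))
    (c : ℝ) (r : ℝ) (hr : 0 < r)
    (hcirc : ∀ k : Fin n, ‖(t k : ℂ) - (c : ℂ)‖ ≠ r) :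
    (circleIntegral f (c : ℂ) r).re = 0 :=
  circleIntegral_re_eq_zero_of_real_poles_general n t m f hf c r hr hcirc
end

section
/- For each index j with 1 ≤ j ≤ n−1 and each real t with t_j < t < t_{j+1}, there is a real number ρ > 0 such that f(t) = ρ · I^(a_{j+1} + a_{j+2} + ⋯ + a_n); moreover, for every real t > t_n, f(t) is a positive real number. In particular, on each open interval between consecutive vertices the Schwarz–Christoffel integrand has constant direction, a power of the imaginary unit I. -/
/-!
For real `x ≠ t`, the principal branch gives `(x - t) ^ (a / 2) = |x - t| ^ (a / 2)` when
`x > t`, and `|x - t| ^ (a / 2) * exp (π i a / 2) = |x - t| ^ (a / 2) * I ^ a` when `x < t`,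
since then `arg (x - t) = π`. Hence `f x` is a positive real times `I` raised to the sum of
the `a k` over the vertices `t k` to the right of `x`; between `t j` and `t (j + 1)` these are
exactly the vertices with `k > j`, and beyond the last vertex there are none.
-/

open Complex Finset

theorem Complex.exp_pi_mul_I_mul_int_div_two (a : ℤ) :
    exp (Real.pi * I * ((a : ℂ) / 2)) = I ^ a := by
  rw [show (Real.pi : ℂ) * I * ((a : ℂ) / 2) = a * (Real.pi / 2 * I) by ring, exp_int_mul,
    exp_pi_div_two_mul_I]

theorem Complex.ofReal_cpow_int_div_two (y : ℝ) (a : ℤ) :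
    (y : ℂ) ^ ((a : ℂ) / 2) = ((|y| ^ ((a : ℝ) / 2) : ℝ) : ℂ) * I ^ (if y < 0 then a else 0) := by
  have hexp : (a : ℂ) / 2 = (((a : ℝ) / 2 : ℝ) : ℂ) := by push_cast; rfl
  split_ifs with hy
  · rw [ofReal_cpow_of_nonpos hy.le, exp_pi_mul_I_mul_int_div_two, abs_of_neg hy,
      ofReal_cpow (neg_nonneg.2 hy.le), ofReal_neg, hexp]
  · rw [abs_of_nonneg (not_lt.1 hy), ofReal_cpow (not_lt.1 hy), zpow_zero, mul_one, hexp]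

theorem Finset.prod_zpow_eq_zpow_sum₀ {ι G₀ : Type*} [CommGroupWithZero G₀] {g : G₀}
    (hg : g ≠ 0) (s : Finset ι) (e : ι → ℤ) : ∏ k ∈ s, g ^ e k = g ^ ∑ k ∈ s, e k := by
  classical
  induction s using Finset.induction with
  | empty => simp
  | insert k s hk ih => rw [prod_insert hk, sum_insert hk, ih, zpow_add₀ hg]

theorem Complex.prod_ofReal_sub_cpow_int_div_two {ι : Type*} (s : Finset ι) (t : ι → ℝ)
    (a : ι → ℤ) (x : ℝ) :
    ∏ k ∈ s, ((x : ℂ) - t k) ^ ((a k : ℂ) / 2) =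
      ((∏ k ∈ s, |x - t k| ^ ((a k : ℝ) / 2) : ℝ) : ℂ) * I ^ ∑ k ∈ s with x < t k, a k := by
  simp_rw [← ofReal_sub, ofReal_cpow_int_div_two, prod_mul_distrib, ofReal_prod,
    prod_zpow_eq_zpow_sum₀ I_ne_zero, sub_neg, sum_filter]

theorem StrictMonoOn.lt_apply_iff_of_mem_Ioo {α : Type*} [LinearOrder α] {t : ℕ → α} {n j k : ℕ}
    (ht : StrictMonoOn t (Set.Iio n)) (hj : j + 1 < n) (hk : k < n) {x : α}
    (hx : x ∈ Set.Ioo (t j) (t (j + 1))) : x < t k ↔ j < k := by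
  constructor
  · intro hxk
    exact (ht.lt_iff_lt (by simp; omega) hk).1 (hx.1.trans hxk)
  · intro hjk
    exact hx.2.trans_le ((ht.le_iff_le hj hk).2 hjk)

theorem StrictMonoOn.apply_lt_iff_of_mem_Ioo {α : Type*} [LinearOrder α] {t : ℕ → α} {n j k : ℕ}
    (ht : StrictMonoOn t (Set.Iio n)) (hj : j + 1 < n) (hk : k < n) {x : α}
    (hx : x ∈ Set.Ioo (t j) (t (j + 1))) : t k < x ↔ k ≤ j := by
  constructor
  · intro hkx
    exact Nat.lt_succ_iff.1 ((ht.lt_iff_lt hk hj).1 (hkx.trans hx.2))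
  · intro hkj
    exact ((ht.le_iff_le hk (by simp; omega)).2 hkj).trans_lt hx.1

theorem StrictMonoOn.filter_lt_apply_range_eq_Ico {α : Type*} [LinearOrder α] {t : ℕ → α}
    {n j : ℕ} (ht : StrictMonoOn t (Set.Iio n)) (hj : j + 1 < n) {x : α}
    (hx : x ∈ Set.Ioo (t j) (t (j + 1))) : {k ∈ range n | x < t k} = Ico (j + 1) n := by
  ext k
  simp only [mem_filter, mem_range, mem_Ico]
  exact ⟨fun ⟨hk, hxk⟩ => ⟨(ht.lt_apply_iff_of_mem_Ioo hj hk hx).1 hxk, hk⟩,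
    fun ⟨hjk, hk⟩ => ⟨hk, (ht.lt_apply_iff_of_mem_Ioo hj hk hx).2 hjk⟩⟩

theorem schwarzChristoffel_integrand_constant_direction_general (n : ℕ)
    (t : ℕ → ℝ) (hmono : ∀ i j : ℕ, i < j → j < n → t i < t j)
    (a : ℕ → ℤ)
    (f : ℂ → ℂ)
    (hf : ∀ z : ℂ, f z = ∏ k ∈ Finset.range n, (z - (t k : ℂ)) ^ ((a k : ℂ) / 2)) :
    (∀ j : ℕ, j + 1 < n → ∀ x : ℝ, t j < x → x < t (j + 1) →
      ∃ ρ : ℝ, 0 < ρ ∧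
        f (x : ℂ) = (ρ : ℂ) * Complex.I ^ (∑ k ∈ Finset.Ico (j + 1) n, a k)) ∧
    (∀ x : ℝ, t (n - 1) < x → ∃ ρ : ℝ, 0 < ρ ∧ f (x : ℂ) = (ρ : ℂ)) := by
  have ht : StrictMonoOn t (Set.Iio n) := fun i _ j hj hij => hmono i j hij hj
  have hρ : ∀ x : ℝ, (∀ k < n, x ≠ t k) → 0 < ∏ k ∈ range n, |x - t k| ^ ((a k : ℝ) / 2) :=
    fun x hx => prod_pos fun k hk =>
      Real.rpow_pos_of_pos (abs_pos.2 (sub_ne_zero.2 (hx k (mem_range.1 hk)))) _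
  constructor
  · intro j hj x hxj hxj'
    refine ⟨_, hρ x fun k hk => ?_, by
      rw [hf, prod_ofReal_sub_cpow_int_div_two, ht.filter_lt_apply_range_eq_Ico hj ⟨hxj, hxj'⟩]⟩
    rcases le_or_gt k j with hkj | hjk
    · exact ((ht.apply_lt_iff_of_mem_Ioo hj hk ⟨hxj, hxj'⟩).2 hkj).ne'
    · exact ((ht.lt_apply_iff_of_mem_Ioo hj hk ⟨hxj, hxj'⟩).2 hjk).ne
  · intro x hx
    have hlt k (hk : k < n) : t k < x :=
      (ht.monotoneOn hk (by simp; omega) (by omega)).trans_lt hx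
    refine ⟨_, hρ x fun k hk => (hlt k hk).ne', ?_⟩
    rw [hf, prod_ofReal_sub_cpow_int_div_two, filter_false_of_mem, sum_empty, zpow_zero, mul_one]
    exact fun k hk => (hlt k (mem_range.1 hk)).asymm

/-- On each open interval between consecutive vertices the
Schwarz–Christoffel integrand `f z = ∏_{k<n} (z − t k) ^ (a k / 2)` has constant
direction, a power of `I`: for each pair of consecutive vertices `t j < t (j+1)` and each
real `x` between them, `f x = ρ • I ^ (a (j+1) + ⋯ + a (n-1))` for some real `ρ > 0`
(the exponent being the integer sum of the vertex data beyond `t j`); and `f x` is a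
positive real number for every real `x` beyond the last vertex `t (n-1)`.
(Vertices are indexed `0, …, n-1` here, corresponding to `t_1, …, t_n` in the paper.) -/
theorem schwarzChristoffel_integrand_constant_direction (n : ℕ) (hn : 1 ≤ n)
    (t : ℕ → ℝ) (hmono : ∀ i j : ℕ, i < j → j < n → t i < t j)
    (a : ℕ → ℤ) (hodd : ∀ k < n, Odd (a k))
    (f : ℂ → ℂ)
    (hf : ∀ z : ℂ, f z = ∏ k ∈ Finset.range n, (z - (t k : ℂ)) ^ ((a k : ℂ) / 2)) :
    (∀ j : ℕ, j + 1 < n → ∀ x : ℝ, t j < x → x < t (j + 1) →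
      ∃ ρ : ℝ, 0 < ρ ∧
        f (x : ℂ) = (ρ : ℂ) * Complex.I ^ (∑ k ∈ Finset.Ico (j + 1) n, a k)) ∧
    (∀ x : ℝ, t (n - 1) < x → ∃ ρ : ℝ, 0 < ρ ∧ f (x : ℂ) = (ρ : ℂ)) :=
  schwarzChristoffel_integrand_constant_direction_general n t hmono a f hf
end

section
/- Let 1 ≤ j ≤ n−2, let x₀ < x₁ be real numbers in the open interval (t_j, t_{j+1}), and let y₀ < y₁ be real numbers in the open interval (t_{j+1}, t_{j+2}). Set P = ∫_{x₀}^{x₁} f(t) dt and Q = ∫_{y₀}^{y₁} f(t) dt (interval integrals of the restriction of f to the real line). Then P ≠ 0, Q ≠ 0, and Re(P · conj(Q)) = 0; that is, the two boundary edges of the Schwarz–Christoffel image adjacent to the vertex t_{j+1} are nondegenerate mutually orthogonal segments. -/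
/-!
On the real line each factor `(x - t)^(a/2)` of the integrand is a positive real number times
`I ^ a` when `x < t` and times `1` when `x > t`, so on an interval free of the `t k` the integrand
is a positive function times the constant phase `I ^ (∑_{t k > x} a k)`, and each edge integral is
a positive multiple of that phase. Passing the vertex `t (j+1)` changes the phase by
`I ^ a (j+1) = ±I` because `a (j+1)` is odd, which is a quarter turn.
-/

open Complex Finset intervalIntegral

lemma zpow_sum₀ {ι G₀ : Type*} [CommGroupWithZero G₀] {g : G₀} (hg : g ≠ 0)
    (s : Finset ι) (e : ι → ℤ) : g ^ ∑ i ∈ s, e i = ∏ i ∈ s, g ^ e i := by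
  classical
  induction s using Finset.induction_on with
  | empty => simp
  | insert i s hi ih => rw [sum_insert hi, prod_insert hi, zpow_add₀ hg, ih]

lemma re_I_zpow_of_odd {p : ℤ} (hp : Odd p) : (I ^ p).re = 0 := by
  obtain ⟨m, rfl⟩ := hp
  rw [zpow_add₀ I_ne_zero, zpow_mul, zpow_two, I_mul_I, zpow_one, ← ofReal_one, ← ofReal_neg,
    ← ofReal_zpow, re_ofReal_mul, I_re, mul_zero]

lemma re_ofReal_mul_I_zpow_mul_conj_of_odd (r ρ : ℝ) {p q : ℤ} (hpq : Odd (p - q)) :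
    ((r * I ^ p) * starRingEnd ℂ (ρ * I ^ q)).re = 0 := by
  have hconj : starRingEnd ℂ (I ^ q) = I ^ (-q) := by
    rw [map_zpow₀, conj_I, ← inv_I, inv_zpow']
  rw [map_mul, conj_ofReal, hconj, mul_mul_mul_comm, ← zpow_add₀ I_ne_zero, ← sub_eq_add_neg,
    ← ofReal_mul, re_ofReal_mul, re_I_zpow_of_odd hpq, mul_zero]

lemma ofReal_cpow_intCast_div_two (x : ℝ) (a : ℤ) :
    (x : ℂ) ^ ((a : ℂ) / 2) = (|x| ^ ((a : ℝ) / 2) : ℝ) * if x < 0 then I ^ a else 1 := by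
  have hexp : ((a : ℂ) / 2) = ((a / 2 : ℝ) : ℂ) := by push_cast; rfl
  split_ifs with hx
  · have hphase : Real.pi * I * ((a / 2 : ℝ) : ℂ) = a * (Real.pi / 2 * I) := by push_cast; ring
    rw [ofReal_cpow_of_nonpos hx.le, abs_of_neg hx, hexp, ← ofReal_neg,
      ← ofReal_cpow (neg_nonneg.2 hx.le), hphase, exp_int_mul, exp_pi_div_two_mul_I]
  · rw [abs_of_nonneg (not_lt.1 hx), hexp, ofReal_cpow (not_lt.1 hx), mul_one]

lemma prod_ofReal_sub_cpow_half {ι : Type*} (s : Finset ι) (t : ι → ℝ) (a : ι → ℤ) (x : ℝ) :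
    ∏ k ∈ s, ((x : ℂ) - t k) ^ ((a k : ℂ) / 2) =
      (∏ k ∈ s, |x - t k| ^ ((a k : ℝ) / 2) : ℝ) * I ^ ∑ k ∈ s with x < t k, a k := by
  simp_rw [← ofReal_sub, ofReal_cpow_intCast_div_two, prod_mul_distrib, ofReal_prod, sub_neg,
    ← prod_filter, zpow_sum₀ I_ne_zero]

lemma exists_pos_integral_prod_ofReal_sub_cpow_half {ι : Type*} {s : Finset ι} {t : ι → ℝ}
    (a : ι → ℤ) {x₀ x₁ : ℝ} (hx₀₁ : x₀ < x₁) (ht : ∀ k ∈ s, t k ∉ Set.Icc x₀ x₁) :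
    ∃ r : ℝ, 0 < r ∧ ∫ x in x₀..x₁, ∏ k ∈ s, ((x : ℂ) - t k) ^ ((a k : ℂ) / 2) =
      r * I ^ ∑ k ∈ s with x₀ < t k, a k := by
  set g : ℝ → ℝ := fun x ↦ ∏ k ∈ s, |x - t k| ^ ((a k : ℝ) / 2)
  have hne : ∀ x ∈ Set.Icc x₀ x₁, ∀ k ∈ s, |x - t k| ≠ 0 := fun x hx k hk ↦
    abs_ne_zero.2 <| sub_ne_zero.2 fun h ↦ ht k hk (h ▸ hx)
  have hphase : ∀ x ∈ Set.Icc x₀ x₁, {k ∈ s | x < t k} = {k ∈ s | x₀ < t k} := by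
    refine fun x hx ↦ filter_congr fun k hk ↦ ⟨hx.1.trans_lt, fun h ↦ ?_⟩
    exact hx.2.trans_lt (not_le.1 fun h' ↦ ht k hk ⟨h.le, h'⟩)
  have hg_cont : ContinuousOn g (Set.uIcc x₀ x₁) := by
    rw [Set.uIcc_of_le hx₀₁.le]
    exact continuousOn_finsetProd _ fun k hk ↦
      (continuous_abs.comp (continuous_sub_right _)).continuousOn.rpow_const
        fun x hx ↦ Or.inl (hne x hx k hk)
  have hg_pos : ∀ x ∈ Set.Ioo x₀ x₁, 0 < g x := fun x hx ↦ prod_pos fun k hk ↦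
    Real.rpow_pos_of_pos ((abs_nonneg _).lt_of_ne' (hne x (Set.Ioo_subset_Icc_self hx) k hk)) _
  refine ⟨∫ x in x₀..x₁, g x,
    intervalIntegral_pos_of_pos_on hg_cont.intervalIntegrable hg_pos hx₀₁, ?_⟩
  rw [← integral_ofReal, ← integral_mul_const]
  refine integral_congr fun x hx ↦ ?_
  rw [Set.uIcc_of_le hx₀₁.le] at hx
  rw [prod_ofReal_sub_cpow_half, hphase x hx]

section StrictMonoOn

variable {n j : ℕ} {t : ℕ → ℝ} {x : ℝ}

lemma StrictMonoOn.apply_notMem_Ioo (ht : StrictMonoOn t (Set.Iio n)) (hj : j < n) {k : ℕ}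
    (hk : k < n) : t k ∉ Set.Ioo (t j) (t (j + 1)) := by
  rintro ⟨hlo, hhi⟩
  rcases le_or_gt k j with hkj | hjk
  · exact (ht.le_iff_le hk hj).2 hkj |>.not_gt hlo
  · exact ((ht.le_iff_le (Set.mem_Iio.2 (by omega)) hk).2 hjk).not_gt hhi

lemma StrictMonoOn.filter_range_lt_eq_Ico (ht : StrictMonoOn t (Set.Iio n)) (hj : j < n)
    (hlo : t j < x) (hhi : x < t (j + 1)) : {k ∈ range n | x < t k} = Ico (j + 1) n := by
  ext k
  simp only [mem_filter, mem_range, mem_Ico]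
  refine ⟨fun ⟨hk, hxk⟩ ↦ ⟨?_, hk⟩, fun ⟨hjk, hk⟩ ↦ ⟨hk, ?_⟩⟩
  · by_contra! hkj
    exact ((ht.le_iff_le hk hj).2 (by omega)).not_gt (hlo.trans hxk)
  · exact hhi.trans_le ((ht.le_iff_le (Set.mem_Iio.2 (by omega)) hk).2 hjk)

end StrictMonoOn

theorem schwarzChristoffel_consecutive_edges_orthogonal_general (n : ℕ)
    (t : ℕ → ℝ) (hmono : ∀ i j : ℕ, i < j → j < n → t i < t j)
    (a : ℕ → ℤ) (hodd : ∀ k < n, Odd (a k))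
    (f : ℂ → ℂ)
    (hf : ∀ z : ℂ, f z = ∏ k ∈ Finset.range n, (z - (t k : ℂ)) ^ ((a k : ℂ) / 2))
    (j : ℕ) (hj : j + 2 < n)
    (x₀ x₁ : ℝ) (hx01 : x₀ < x₁) (hx₀ : t j < x₀) (hx₁ : x₁ < t (j + 1))
    (y₀ y₁ : ℝ) (hy01 : y₀ < y₁) (hy₀ : t (j + 1) < y₀) (hy₁ : y₁ < t (j + 2))
    (P Q : ℂ)
    (hP : P = ∫ x in x₀..x₁, f (x : ℂ))
    (hQ : Q = ∫ y in y₀..y₁, f (y : ℂ)) :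
    P ≠ 0 ∧ Q ≠ 0 ∧ (P * (starRingEnd ℂ) Q).re = 0 := by
  have ht : StrictMonoOn t (Set.Iio n) := fun i _ k hk hik ↦ hmono i k hik hk
  obtain ⟨r, hr, hPr⟩ := exists_pos_integral_prod_ofReal_sub_cpow_half a hx01
    fun k hk hmem ↦ ht.apply_notMem_Ioo (j := j) (by omega : j < n) (mem_range.1 hk)
      ⟨hx₀.trans_le hmem.1, hmem.2.trans_lt hx₁⟩
  obtain ⟨ρ, hρ, hQr⟩ := exists_pos_integral_prod_ofReal_sub_cpow_half a hy01
    fun k hk hmem ↦ ht.apply_notMem_Ioo (j := j + 1) (by omega : j + 1 < n) (mem_range.1 hk)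
      ⟨hy₀.trans_le hmem.1, hmem.2.trans_lt hy₁⟩
  rw [ht.filter_range_lt_eq_Ico (by omega) hx₀ (hx01.trans hx₁)] at hPr
  rw [ht.filter_range_lt_eq_Ico (by omega) hy₀ (hy01.trans hy₁)] at hQr
  simp only [hf] at hP hQ
  rw [hP, hPr, hQ, hQr]
  refine ⟨mul_ne_zero (ofReal_ne_zero.2 hr.ne') (zpow_ne_zero _ I_ne_zero),
    mul_ne_zero (ofReal_ne_zero.2 hρ.ne') (zpow_ne_zero _ I_ne_zero),
    re_ofReal_mul_I_zpow_mul_conj_of_odd r ρ ?_⟩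
  rw [sum_eq_sum_Ico_succ_bot (by omega : j + 1 < n), add_sub_cancel_right]
  exact hodd _ (by omega)

/-- Consecutive edges of the Schwarz–Christoffel image meet
orthogonally: if `x₀ < x₁` lie in the open interval `(t j, t (j+1))` and `y₀ < y₁` lie in
`(t (j+1), t (j+2))`, then the edge integrals `P = ∫_{x₀}^{x₁} f` and
`Q = ∫_{y₀}^{y₁} f` are nonzero and satisfy `Re (P * conj Q) = 0`, i.e. they are
nondegenerate mutually orthogonal segments.
(Vertices are indexed `0, …, n-1` here, corresponding to `t_1, …, t_n` in the paper.) -/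
theorem schwarzChristoffel_consecutive_edges_orthogonal (n : ℕ) (hn : 1 ≤ n)
    (t : ℕ → ℝ) (hmono : ∀ i j : ℕ, i < j → j < n → t i < t j)
    (a : ℕ → ℤ) (hodd : ∀ k < n, Odd (a k))
    (f : ℂ → ℂ)
    (hf : ∀ z : ℂ, f z = ∏ k ∈ Finset.range n, (z - (t k : ℂ)) ^ ((a k : ℂ) / 2))
    (j : ℕ) (hj : j + 2 < n)
    (x₀ x₁ : ℝ) (hx01 : x₀ < x₁) (hx₀ : t j < x₀) (hx₁ : x₁ < t (j + 1))
    (y₀ y₁ : ℝ) (hy01 : y₀ < y₁) (hy₀ : t (j + 1) < y₀) (hy₁ : y₁ < t (j + 2))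
    (P Q : ℂ)
    (hP : P = ∫ x in x₀..x₁, f (x : ℂ))
    (hQ : Q = ∫ y in y₀..y₁, f (y : ℂ)) :
    P ≠ 0 ∧ Q ≠ 0 ∧ (P * (starRingEnd ℂ) Q).re = 0 :=
  schwarzChristoffel_consecutive_edges_orthogonal_general n t hmono a hodd f hf j hj x₀ x₁ hx01 hx₀
    hx₁ y₀ y₁ hy01 hy₀ hy₁ P Q hP hQ
end

section
/- Suppose the index j satisfies a_j ≥ −1 (so t_j is a finite vertex in the paper's terminology). Then for every δ > 0 smaller than the distance from t_j to every other vertex t_k (k ≠ j), the function t ↦ f(t) of the real variable t is interval integrable on [t_j − δ, t_j + δ] with respect to Lebesgue measure. -/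
/-!
Split off the factor `(x - t j) ^ (a j / 2)`. Since `a j ≥ -1`, its exponent has real part
`> -1`, so it is integrable near `t j`. On `[t j - δ, t j + δ]` every other factor has a
nonvanishing real base and is therefore continuous.
-/

open Set

lemma intervalIntegrable_ofReal_sub_cpow {s : ℂ} (hs : -1 < s.re) (c a b : ℝ) :
    IntervalIntegrable (fun x : ℝ => ((x : ℂ) - c) ^ s) MeasureTheory.volume a b := by
  have h := (intervalIntegral.intervalIntegrable_cpow' (a := a - c) (b := b - c) hs).comp_sub_right c
  simpa only [sub_add_cancel, Complex.ofReal_sub] using h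

lemma continuousOn_ofReal_sub_cpow {c : ℝ} {S : Set ℝ} (hc : c ∉ S) (s : ℂ) :
    ContinuousOn (fun x : ℝ => ((x : ℂ) - c) ^ s) S := by
  intro x hx
  have hxc : x - c ≠ 0 := sub_ne_zero.mpr fun h => hc (h ▸ hx)
  have h := (Complex.continuousAt_ofReal_cpow_const (x - c) s (Or.inr hxc)).comp (x := x)
    (continuous_sub_right c).continuousAt
  simpa only [Function.comp_def, Complex.ofReal_sub] using h.continuousWithinAt

lemma notMem_uIcc_of_lt_abs_sub {c d δ : ℝ} (hδ : 0 ≤ δ) (h : δ < |c - d|) :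
    d ∉ uIcc (c - δ) (c + δ) := by
  intro hd
  rw [uIcc_of_le (by linarith)] at hd
  have : |c - d| ≤ δ := abs_sub_le_iff.mpr ⟨by linarith [hd.1], by linarith [hd.2]⟩
  linarith

theorem schwarzChristoffel_integrable_at_finite_vertex_general (n : ℕ)
    (t : ℕ → ℝ)
    (a : ℕ → ℤ)
    (f : ℂ → ℂ)
    (hf : ∀ z : ℂ, f z = ∏ k ∈ Finset.range n, (z - (t k : ℂ)) ^ ((a k : ℂ) / 2))
    (j : ℕ) (hjn : j < n) (hja : -1 ≤ a j) :
    ∀ δ : ℝ, 0 < δ → (∀ k < n, k ≠ j → δ < |t j - t k|) →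
      IntervalIntegrable (fun x : ℝ => f (x : ℂ)) MeasureTheory.volume
        (t j - δ) (t j + δ) := by
  intro δ hδ hδk
  have hsplit : (fun x : ℝ => f x) = fun x : ℝ => ((x : ℂ) - t j) ^ ((a j : ℂ) / 2) *
      ∏ k ∈ (Finset.range n).erase j, ((x : ℂ) - t k) ^ ((a k : ℂ) / 2) := by
    funext x
    rw [hf, Finset.mul_prod_erase _ (fun k => ((x : ℂ) - t k) ^ ((a k : ℂ) / 2))
      (Finset.mem_range.mpr hjn)]
  have hre : -1 < ((a j : ℂ) / 2).re := by
    have : (-1 : ℝ) ≤ a j := by exact_mod_cast hja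
    simp only [Complex.div_ofNat_re, Complex.intCast_re]
    linarith
  rw [hsplit]
  refine (intervalIntegrable_ofReal_sub_cpow hre _ _ _).mul_continuousOn ?_
  refine continuousOn_finsetProd _ fun k hk => continuousOn_ofReal_sub_cpow ?_ _
  obtain ⟨hkj, hkn⟩ := Finset.mem_erase.mp hk
  exact notMem_uIcc_of_lt_abs_sub hδ.le (hδk k (Finset.mem_range.mp hkn) hkj)

/-- At a finite vertex `t j` (one with `a j ≥ −1`), the
Schwarz–Christoffel integrand `f z = ∏_{k<n} (z − t k) ^ (a k / 2)`, restricted to the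
real line, is interval integrable on `[t j − δ, t j + δ]` with respect to Lebesgue
measure, for every `δ > 0` smaller than the distance from `t j` to every other vertex. -/
theorem schwarzChristoffel_integrable_at_finite_vertex (n : ℕ) (hn : 1 ≤ n)
    (t : ℕ → ℝ) (hmono : ∀ i j : ℕ, i < j → j < n → t i < t j)
    (a : ℕ → ℤ) (hodd : ∀ k < n, Odd (a k))
    (f : ℂ → ℂ)
    (hf : ∀ z : ℂ, f z = ∏ k ∈ Finset.range n, (z - (t k : ℂ)) ^ ((a k : ℂ) / 2))
    (j : ℕ) (hjn : j < n) (hja : -1 ≤ a j) :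
    ∀ δ : ℝ, 0 < δ → (∀ k < n, k ≠ j → δ < |t j - t k|) →
      IntervalIntegrable (fun x : ℝ => f (x : ℂ)) MeasureTheory.volume
        (t j - δ) (t j + δ) :=
  schwarzChristoffel_integrable_at_finite_vertex_general n t a f hf j hjn hja
end

section
/- Suppose the index j satisfies a_j ≤ −3 (so t_j is an infinite vertex in the paper's terminology). Then for every δ > 0, the function t ↦ f(t) of the real variable t is not interval integrable on [t_j, t_j + δ] with respect to Lebesgue measure. -/
/-!
On the real line `‖f x‖ = |x - t j| ^ (a j / 2) · g x`, where `g` is the product of the moduli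
of the other factors. The `t k` are distinct, so `g` is continuous and positive at `t j`, and
for `|x - t j| ≤ 1` we get `|x - t j| ^ (a j / 2) ≥ |x - t j|⁻¹` because `a j / 2 ≤ -1`.
Hence `f` grows at least like `(x - t j)⁻¹` at `t j`, which is not integrable there.
-/

open Asymptotics Filter MeasureTheory Set Topology

lemma sub_inv_isBigO_abs_sub_rpow {p : ℝ} (hp : p ≤ -1) (c : ℝ) :
    (fun x : ℝ => (x - c)⁻¹) =O[𝓝[≠] c] fun x => |x - c| ^ p := by
  have hnear : ∀ᶠ x in 𝓝[≠] c, |x - c| ≤ 1 := nhdsWithin_le_nhds <|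
    Metric.eventually_nhds_iff.2 ⟨1, one_pos, fun x hx => (Real.dist_eq x c ▸ hx).le⟩
  refine IsBigO.of_bound 1 ?_
  filter_upwards [self_mem_nhdsWithin, hnear] with x hx hx1
  have hpos : 0 < |x - c| := abs_pos.2 (sub_ne_zero.2 hx)
  rw [one_mul, norm_inv, Real.norm_eq_abs, Real.norm_of_nonneg (by positivity),
    ← Real.rpow_neg_one]
  exact Real.rpow_le_rpow_of_exponent_ge hpos hx1 hp

lemma one_isBigO_of_continuousAt {g : ℝ → ℝ} {c : ℝ} (hg : ContinuousAt g c) (hgc : 0 < g c) :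
    (fun _ => (1 : ℝ)) =O[𝓝 c] g := by
  refine (isBigO_const_left_iff_pos_le_norm one_ne_zero).2 ⟨g c / 2, half_pos hgc, ?_⟩
  filter_upwards [hg.eventually_const_lt (half_lt_self hgc)] with x hx
  exact hx.le.trans (Real.le_norm_self _)

theorem not_intervalIntegrable_of_norm_eq_abs_sub_rpow_mul {E : Type*} [NormedAddCommGroup E]
    {f : ℝ → E} {g : ℝ → ℝ} {a b c p : ℝ} (hp : p ≤ -1)
    (hfg : ∀ x, ‖f x‖ = |x - c| ^ p * g x) (hg : ContinuousAt g c) (hgc : 0 < g c)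
    (hne : a ≠ b) (hc : c ∈ uIcc a b) :
    ¬IntervalIntegrable f volume a b := by
  refine not_intervalIntegrable_of_sub_inv_isBigO_punctured ?_ hne hc
  rw [← isBigO_norm_right]
  simpa only [mul_one, hfg] using (sub_inv_isBigO_abs_sub_rpow hp c).mul
    ((one_isBigO_of_continuousAt hg hgc).mono nhdsWithin_le_nhds)

lemma norm_ofReal_sub_cpow_intCast_div_two (x s : ℝ) (m : ℤ) :
    ‖((x : ℂ) - s) ^ ((m : ℂ) / 2)‖ = |x - s| ^ ((m : ℝ) / 2) := by
  have hexp : (m : ℂ) / 2 = ((m / 2 : ℝ) : ℂ) := by push_cast; ring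
  rw [hexp, ← Complex.ofReal_sub, Complex.norm_cpow_real, Complex.norm_real, Real.norm_eq_abs]

lemma continuousAt_prod_abs_sub_rpow {ι : Type*} (s : Finset ι) (t p : ι → ℝ) {c : ℝ}
    (hc : ∀ k ∈ s, c ≠ t k) :
    ContinuousAt (fun x => ∏ k ∈ s, |x - t k| ^ p k) c :=
  tendsto_finsetProd s fun k hk =>
    ((continuous_sub_right (t k)).abs.continuousAt).rpow_const
      (Or.inl (abs_ne_zero.2 (sub_ne_zero.2 (hc k hk))))

lemma prod_abs_sub_rpow_pos {ι : Type*} (s : Finset ι) (t p : ι → ℝ) {c : ℝ}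
    (hc : ∀ k ∈ s, c ≠ t k) :
    0 < ∏ k ∈ s, |c - t k| ^ p k :=
  Finset.prod_pos fun k hk => Real.rpow_pos_of_pos (abs_pos.2 (sub_ne_zero.2 (hc k hk))) _

theorem schwarzChristoffel_not_integrable_at_infinite_vertex_general (n : ℕ)
    (t : ℕ → ℝ) (hmono : ∀ i j : ℕ, i < j → j < n → t i < t j)
    (a : ℕ → ℤ)
    (f : ℂ → ℂ)
    (hf : ∀ z : ℂ, f z = ∏ k ∈ Finset.range n, (z - (t k : ℂ)) ^ ((a k : ℂ) / 2))
    (j : ℕ) (hjn : j < n) (hja : a j ≤ -3) :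
    ∀ δ : ℝ, 0 < δ →
      ¬ IntervalIntegrable (fun x : ℝ => f (x : ℂ)) MeasureTheory.volume
          (t j) (t j + δ) := by
  intro δ hδ
  set others := (Finset.range n).erase j
  have hdistinct : ∀ k ∈ others, t j ≠ t k := by
    intro k hk
    obtain ⟨hkj, hkn⟩ := Finset.mem_erase.1 hk
    rcases lt_or_gt_of_ne hkj with hlt | hgt
    · exact (hmono k j hlt hjn).ne'
    · exact (hmono j k hgt (Finset.mem_range.1 hkn)).ne
  have hnorm : ∀ x : ℝ, ‖f x‖ = |x - t j| ^ ((a j : ℝ) / 2) *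
      ∏ k ∈ others, |x - t k| ^ ((a k : ℝ) / 2) := by
    intro x
    simp only [hf, Complex.norm_prod, norm_ofReal_sub_cpow_intCast_div_two, others]
    exact (Finset.mul_prod_erase _ _ (Finset.mem_range.2 hjn)).symm
  have hexp : (a j : ℝ) / 2 ≤ -1 := by
    have : (a j : ℝ) ≤ -3 := by exact_mod_cast hja
    linarith
  exact not_intervalIntegrable_of_norm_eq_abs_sub_rpow_mul hexp hnorm
    (continuousAt_prod_abs_sub_rpow _ _ _ hdistinct) (prod_abs_sub_rpow_pos _ _ _ hdistinct)
    (by linarith) left_mem_uIcc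

/-- At an infinite vertex `t j` (one with `a j ≤ −3`), the
Schwarz–Christoffel integrand `f z = ∏_{k<n} (z − t k) ^ (a k / 2)`, restricted to the
real line, is not interval integrable on `[t j, t j + δ]` for any `δ > 0`: such a vertex
lies at infinite distance in the orthodisk metric. -/
theorem schwarzChristoffel_not_integrable_at_infinite_vertex (n : ℕ) (hn : 1 ≤ n)
    (t : ℕ → ℝ) (hmono : ∀ i j : ℕ, i < j → j < n → t i < t j)
    (a : ℕ → ℤ) (hodd : ∀ k < n, Odd (a k))
    (f : ℂ → ℂ)
    (hf : ∀ z : ℂ, f z = ∏ k ∈ Finset.range n, (z - (t k : ℂ)) ^ ((a k : ℂ) / 2))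
    (j : ℕ) (hjn : j < n) (hja : a j ≤ -3) :
    ∀ δ : ℝ, 0 < δ →
      ¬ IntervalIntegrable (fun x : ℝ => f (x : ℂ)) MeasureTheory.volume
          (t j) (t j + δ) :=
  schwarzChristoffel_not_integrable_at_infinite_vertex_general n t hmono a f hf j hjn hja
end

section
/- Let f : ℝ × ℂ → ℂ be twice continuously differentiable in the real sense (C² as a map of real variables), with f(0, z) = z for all z ∈ ℂ. For ε ∈ ℝ and z ∈ ℂ let D f_ε(z) denote the real Fréchet derivative of f(ε, ·) at z, and define the Wirtinger derivatives ∂f(ε, z) = ½(D f_ε(z)(1) − i · D f_ε(z)(i)) and ∂̄f(ε, z) = ½(D f_ε(z)(1) + i · D f_ε(z)(i)), and the Beltrami coefficient ν(ε, z) = ∂̄f(ε, z) / ∂f(ε, z). Let f̊(z) denote the derivative at ε = 0 of ε ↦ f(ε, z). Then for each z ∈ ℂ the function ε ↦ ν(ε, z) is differentiable at ε = 0, with derivative equal to ∂̄f̊(z) = ½(D f̊(z)(1) + i · D f̊(z)(i)). -/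
/-!
At `ε = 0` the map `f (0, ·)` is the identity, so there `∂f = 1` and `∂̄f = 0`; the quotient rule
then reduces the derivative of `ν = ∂̄f / ∂f` to the `ε`-derivative of `∂̄f(ε, z)`. As `∂̄` is a
linear expression in the partial derivative in `z`, this is `∂̄f̊(z)` once the mixed second
partials of the `C²` map `f` commute (Schwarz).
-/

open Complex ContinuousLinearMap

section Slices

variable {𝕜 F G : Type*} [RCLike 𝕜] [NormedAddCommGroup F] [NormedSpace 𝕜 F]
  [NormedAddCommGroup G] [NormedSpace 𝕜 G] {f : 𝕜 × F → G}

theorem fderiv_slice_right {s : 𝕜} {y : F} (hf : DifferentiableAt 𝕜 f (s, y)) :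
    fderiv 𝕜 (fun w => f (s, w)) y = (fderiv 𝕜 f (s, y)).comp (inr 𝕜 𝕜 F) :=
  (hf.hasFDerivAt.comp y (hasFDerivAt_prodMk_right s y)).fderiv

theorem hasDerivAt_slice_left {s : 𝕜} {y : F} (hf : DifferentiableAt 𝕜 f (s, y)) :
    HasDerivAt (fun t => f (t, y)) (fderiv 𝕜 f (s, y) (1, 0)) s :=
  hf.hasFDerivAt.comp_hasDerivAt s ((hasDerivAt_id s).prodMk (hasDerivAt_const s y))

theorem hasDerivAt_fderiv_slice_right (hf : ContDiff 𝕜 2 f) (s : 𝕜) (y : F) :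
    HasDerivAt (fun t => fderiv 𝕜 (fun w => f (t, w)) y)
      (fderiv 𝕜 (fun w => deriv (fun t => f (t, w)) s) y) s := by
  have hf1 : Differentiable 𝕜 f := hf.differentiable two_ne_zero
  have hf2 : Differentiable 𝕜 (fderiv 𝕜 f) :=
    (hf.fderiv_right (m := 1) le_rfl).differentiable one_ne_zero
  have hsymm : IsSymmSndFDerivAt 𝕜 f (s, y) :=
    hf.contDiffAt.isSymmSndFDerivAt (by simp)
  have hslice : (fun t => fderiv 𝕜 (fun w => f (t, w)) y)
      = fun t => (fderiv 𝕜 f (t, y)).comp (inr 𝕜 𝕜 F) :=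
    funext fun t => fderiv_slice_right (hf1 _)
  have hdot : (fun w => deriv (fun t => f (t, w)) s) = fun w => fderiv 𝕜 f (s, w) (1, 0) :=
    funext fun w => (hasDerivAt_slice_left (hf1 _)).deriv
  rw [hslice, hdot]
  convert (hasDerivAt_slice_left (hf2 (s, y))).clm_comp (hasDerivAt_const s (inr 𝕜 𝕜 F)) using 1
  have hpartial : HasFDerivAt (fun w => fderiv 𝕜 f (s, w) (1, 0))
      ((apply 𝕜 G ((1 : 𝕜), (0 : F))).comp ((fderiv 𝕜 (fderiv 𝕜 f) (s, y)).comp (inr 𝕜 𝕜 F))) y :=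
    (apply 𝕜 G ((1 : 𝕜), (0 : F))).hasFDerivAt.comp y
      ((hf2 _).hasFDerivAt.comp y (hasFDerivAt_prodMk_right s y))
  ext v
  simp [hpartial.fderiv, hsymm (0, v) (1, 0)]

end Slices

theorem HasDerivAt.div_of_eq_zero_of_eq_one {𝕜 𝕜' : Type*} [NontriviallyNormedField 𝕜]
    [NontriviallyNormedField 𝕜'] [NormedAlgebra 𝕜 𝕜'] {p q : 𝕜 → 𝕜'} {p' q' : 𝕜'} {x : 𝕜}
    (hp : HasDerivAt p p' x) (hq : HasDerivAt q q' x) (hp0 : p x = 0) (hq1 : q x = 1) :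
    HasDerivAt (fun y => p y / q y) p' x := by
  simpa [hp0, hq1] using hp.fun_div hq (by simp [hq1])

/-- infinitesimal Beltrami differential, §2.2 of the paper. Let
`f : ℝ × ℂ → ℂ` be `C²` in the real sense with `f 0 = id`. With
`∂f(ε,z) = ½(Df_ε(z)(1) − i·Df_ε(z)(i))`, `∂̄f(ε,z) = ½(Df_ε(z)(1) + i·Df_ε(z)(i))`
(Wirtinger derivatives of `f(ε, ·)`), Beltrami coefficient `ν(ε,z) = ∂̄f/∂f`, and
`f̊(z) = d/dε|₀ f(ε,z)`, the function `ε ↦ ν(ε,z)` is differentiable at `ε = 0` with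
derivative `∂̄f̊(z) = ½(Df̊(z)(1) + i·Df̊(z)(i))`. -/
theorem infinitesimal_beltrami_eq_dbar_of_variation (f : ℝ × ℂ → ℂ)
    (hf : ContDiff ℝ 2 f)
    (hf0 : ∀ z : ℂ, f (0, z) = z)
    (ν : ℝ → ℂ → ℂ)
    (hν : ∀ (ε : ℝ) (z : ℂ), ν ε z =
      ((fderiv ℝ (fun w : ℂ => f (ε, w)) z 1
          + Complex.I * fderiv ℝ (fun w : ℂ => f (ε, w)) z Complex.I) / 2) /
      ((fderiv ℝ (fun w : ℂ => f (ε, w)) z 1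
          - Complex.I * fderiv ℝ (fun w : ℂ => f (ε, w)) z Complex.I) / 2))
    (fdot : ℂ → ℂ)
    (hfdot : ∀ z : ℂ, fdot z = deriv (fun ε : ℝ => f (ε, z)) 0) :
    ∀ z : ℂ, HasDerivAt (fun ε : ℝ => ν ε z)
      ((fderiv ℝ fdot z 1 + Complex.I * fderiv ℝ fdot z Complex.I) / 2) 0 := by
  obtain rfl : ν = _ := funext fun ε => funext (hν ε)
  obtain rfl : fdot = _ := funext hfdot
  intro z
  have hDf (v : ℂ) : HasDerivAt (fun ε : ℝ => fderiv ℝ (fun w : ℂ => f (ε, w)) z v)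
      (fderiv ℝ (fun w => deriv (fun ε : ℝ => f (ε, w)) 0) z v) 0 := by
    simpa using (hasDerivAt_fderiv_slice_right hf 0 z).clm_apply (hasDerivAt_const 0 v)
  have hDf0 : fderiv ℝ (fun w : ℂ => f (0, w)) z = ContinuousLinearMap.id ℝ ℂ := by
    simp [hf0]
  refine HasDerivAt.div_of_eq_zero_of_eq_one (((hDf 1).add ((hDf I).const_mul I)).div_const 2)
    (((hDf 1).sub ((hDf I).const_mul I)).div_const 2) ?_ ?_ <;>
  · simp only [hDf0, ContinuousLinearMap.id_apply, I_mul_I]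
    ring
end
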